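/- Let K be a field of characteristic zero containing all roots of unity, V a K-vector space of finite positive dimension d, and φ : V × V → K a nondegenerate symmetric K-bilinear form that is anisotropic. Let B be a finite subgroup of PO(V,φ) = GO(V,φ)/(K*·1_V). Then B contains a normal subgroup A₁ such that: A₁ is an elementary abelian 2-group whose order divides 2^{d-1}, and the quotient B/A₁ is an elementary abelian 2-group. In particular, B is a finite 2-group and its second derived subgroup is trivial, i.e., [[B,B],[B,B]] = {1}. -/

import Mathlib

variable {K V : Type*} [Field K] [AddCommGroup V] [Module K V]

/-- The group of similitudes `GO(V,φ)`: the subgroup of the group of `K`-linear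
automorphisms of `V` consisting of those `u` for which there is `μ ∈ K*` with
`φ(ux,uy) = μ·φ(x,y)` for all `x,y ∈ V`. -/
def similitudeSubgroup (φ : LinearMap.BilinForm K V) : Subgroup (V ≃ₗ[K] V) where
  carrier := {u | ∃ μ : K, μ ≠ 0 ∧ ∀ x y : V, φ (u x) (u y) = μ * φ x y}
  one_mem' := ⟨1, one_ne_zero, fun x y => by rw [one_mul]; rfl⟩
  mul_mem' := by
    rintro u v ⟨μ, hμ, hu⟩ ⟨ν, hν, hv⟩
    refine ⟨μ * ν, mul_ne_zero hμ hν, fun x y => ?_⟩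
    have h : φ ((u * v) x) ((u * v) y) = φ (u (v x)) (u (v y)) := rfl
    rw [h, hu, hv]; ring
  inv_mem' := by
    rintro u ⟨μ, hμ, hu⟩
    refine ⟨μ⁻¹, inv_ne_zero hμ, fun x y => ?_⟩
    have h := hu ((u⁻¹ : V ≃ₗ[K] V) x) ((u⁻¹ : V ≃ₗ[K] V) y)
    rw [show u ((u⁻¹ : V ≃ₗ[K] V) x) = x from u.apply_symm_apply x,
      show u ((u⁻¹ : V ≃ₗ[K] V) y) = y from u.apply_symm_apply y] at h
    rw [h, inv_mul_cancel_left₀ hμ]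

/-- The central subgroup `K*·1_V` of `GO(V,φ)` consisting of the nonzero scalar
automorphisms. -/
def scalarSubgroup (φ : LinearMap.BilinForm K V) : Subgroup (similitudeSubgroup φ) where
  carrier := {u | ∃ c : K, c ≠ 0 ∧ ∀ x : V, (u : V ≃ₗ[K] V) x = c • x}
  one_mem' := ⟨1, one_ne_zero, fun x => by simp⟩
  mul_mem' := by
    rintro u v ⟨c, hc, hcu⟩ ⟨d, hd, hdv⟩
    refine ⟨c * d, mul_ne_zero hc hd, fun x => ?_⟩
    have h : ((u * v : similitudeSubgroup φ) : V ≃ₗ[K] V) x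
        = (u : V ≃ₗ[K] V) ((v : V ≃ₗ[K] V) x) := rfl
    rw [h, hdv, map_smul, hcu, smul_smul, mul_comm]
  inv_mem' := by
    rintro u ⟨c, hc, hcu⟩
    refine ⟨c⁻¹, inv_ne_zero hc, fun x => ?_⟩
    apply (u : V ≃ₗ[K] V).injective
    rw [show ((u⁻¹ : similitudeSubgroup φ) : V ≃ₗ[K] V) x = (u : V ≃ₗ[K] V).symm x from rfl,
      (u : V ≃ₗ[K] V).apply_symm_apply, map_smul, hcu, smul_smul, inv_mul_cancel₀ hc, one_smul]

instance scalarSubgroup_normal (φ : LinearMap.BilinForm K V) : (scalarSubgroup φ).Normal := by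
  constructor
  rintro n ⟨c, hc, hn⟩ g
  refine ⟨c, hc, fun x => ?_⟩
  have h1 : ((g * n * g⁻¹ : similitudeSubgroup φ) : V ≃ₗ[K] V) x
      = (g : V ≃ₗ[K] V) ((n : V ≃ₗ[K] V) ((g : V ≃ₗ[K] V).symm x)) := rfl
  rw [h1, hn, map_smul, (g : V ≃ₗ[K] V).apply_symm_apply]

/-- The projective orthogonal group `PO(V,φ) = GO(V,φ)/(K*·1_V)`. -/
abbrev projOrthogonalGroup (φ : LinearMap.BilinForm K V) :=
  similitudeSubgroup φ ⧸ scalarSubgroup φ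

open scoped commutatorElement

/-!
The similitude factor modulo squares is a homomorphism `PO(V,φ) → K*/K*²` into an elementary
abelian `2`-group; `A₁` is its kernel in `B`, so `B/A₁` is elementary abelian. An element of `A₁`
lifts to an isometry `u`, and if its class has order `m` then `u ^ m` is a scalar isometry `±1`,
so `u ^ (2m) = 1`. As `K` contains the `2m`-th roots of unity, `V` is spanned by eigenvectors
of `u`, and anisotropy forces their eigenvalues to be `±1`: `u` is an involution. The isometries
lifting `A₁` thus form a group of commuting involutions, which splitting `V` along the
eigenspaces of its elements shows to have order dividing `2 ^ d`; it is a double cover of `A₁`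
(with kernel `±1`), whence `|A₁|` divides `2 ^ (d - 1)`.
-/

open Finset in
theorem Module.End.iSup_eigenspace_eq_top_of_pow_eq_one {f : Module.End K V} {n : ℕ} {ζ : K}
    (hζ : IsPrimitiveRoot ζ n) (hn : (n : K) ≠ 0) (hf : f ^ n = 1) :
    ⨆ μ, f.eigenspace μ = ⊤ := by
  have hn0 : n ≠ 0 := by rintro rfl; exact hn Nat.cast_zero
  refine eq_top_iff.2 fun x _ => ?_
  -- the discrete Fourier transform of the orbit of `x`
  let z (j : ℕ) : V := ∑ k ∈ range n, ζ ^ (j * k) • (f ^ k) x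
  have hz (j : ℕ) : z j ∈ f.eigenspace (ζ ^ j)⁻¹ := by
    have hperiodic : ζ ^ (j * n) • (f ^ n) x = x := by
      rw [pow_mul', hζ.pow_eq_one, one_pow, one_smul, hf, Module.End.one_apply]
    have htelescope : ζ ^ j • f (z j) - z j = 0 := by
      have := sum_range_sub (fun k => ζ ^ (j * k) • (f ^ k) x) n
      simp only [mul_zero, pow_zero, one_smul, Module.End.one_apply, hperiodic, sub_self] at this
      rw [← this, map_sum, smul_sum, ← sum_sub_distrib]
      refine sum_congr rfl fun k _ => ?_
      rw [map_smul, smul_smul, ← pow_add, mul_add_one, add_comm, pow_succ', Module.End.mul_apply]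
    rw [Module.End.mem_eigenspace_iff, eq_inv_smul_iff₀ (pow_ne_zero j (hζ.ne_zero hn0))]
    exact sub_eq_zero.1 htelescope
  have hsum : ∑ j ∈ range n, z j = (n : K) • x := by
    rw [sum_comm]
    simp_rw [mul_comm _ (_ : ℕ), pow_mul, ← sum_smul]
    rw [sum_eq_single_of_mem 0 (mem_range.2 (Nat.pos_of_ne_zero hn0))]
    · simp
    · intro k hk hk0
      rw [geom_sum_eq (hζ.pow_ne_one_of_pos_of_lt hk0 (mem_range.1 hk)), ← pow_mul, mul_comm,
        pow_mul, hζ.pow_eq_one, one_pow, sub_self, zero_div, zero_smul]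
  rw [← inv_smul_smul₀ hn x, ← hsum]
  exact Submodule.smul_mem _ _ (Submodule.sum_mem _ fun j _ => Submodule.mem_iSup_of_mem _ (hz j))

theorem LinearMap.BilinForm.isometry_sq_eq_one_of_pow_eq_one {φ : LinearMap.BilinForm K V}
    (haniso : ∀ v : V, v ≠ 0 → φ v v ≠ 0) {f : Module.End K V}
    (hf : ∀ x, φ (f x) (f x) = φ x x) {n : ℕ} {ζ : K} (hζ : IsPrimitiveRoot ζ n)
    (hn : (n : K) ≠ 0) (hfn : f ^ n = 1) : f ^ 2 = 1 := by
  suffices ⊤ ≤ LinearMap.ker (f ^ 2 - 1) by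
    rwa [top_le_iff, LinearMap.ker_eq_top, sub_eq_zero] at this
  rw [← Module.End.iSup_eigenspace_eq_top_of_pow_eq_one hζ hn hfn, iSup_le_iff]
  intro μ v hv
  rw [Module.End.mem_eigenspace_iff] at hv
  have hfv : (f ^ 2) v = μ ^ 2 • v := by
    rw [sq, Module.End.mul_apply, hv, map_smul, hv, smul_smul, sq]
  rw [LinearMap.mem_ker, LinearMap.sub_apply, Module.End.one_apply, hfv, sub_eq_zero]
  rcases eq_or_ne v 0 with rfl | hv0
  · exact smul_zero _
  have hμ : (μ ^ 2 - 1) * φ v v = 0 := by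
    have := hf v
    simp only [hv, map_smul, LinearMap.smul_apply, smul_eq_mul] at this
    linear_combination this
  rw [(mul_eq_zero.1 hμ).resolve_right (haniso v hv0) |> sub_eq_zero.1, one_smul]

theorem Module.End.isCompl_eigenspace_one_neg_one {f : Module.End K V} (hf : f ^ 2 = 1)
    (h2 : (2 : K) ≠ 0) : IsCompl (f.eigenspace 1) (f.eigenspace (-1)) := by
  have hff (x : V) : f (f x) = x := by rw [← Module.End.mul_apply, ← sq, hf, Module.End.one_apply]
  refine ⟨Module.End.disjoint_genEigenspace f (fun h => h2 (by linear_combination h)) 1 1, ?_⟩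
  rw [codisjoint_iff, eq_top_iff]
  intro x _
  have hx : x = (2 : K)⁻¹ • (x + f x) + (2 : K)⁻¹ • (x - f x) := by
    rw [← smul_add, add_add_sub_cancel, ← two_smul K, inv_smul_smul₀ h2]
  rw [hx]
  refine Submodule.add_mem_sup ?_ ?_ <;>
    simp only [Module.End.mem_eigenspace_iff, map_smul, map_add, map_sub, hff]
  · rw [one_smul, add_comm]
  · rw [neg_one_smul, ← smul_neg, neg_sub]

theorem LinearEquiv.orderOf_neg_dvd_two_pow_finrank [FiniteDimensional K V] :
    orderOf (LinearEquiv.neg K : V ≃ₗ[K] V) ∣ 2 ^ Module.finrank K V := by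
  refine orderOf_dvd_of_pow_eq_one ?_
  rcases Nat.eq_zero_or_pos (Module.finrank K V) with hV | hV
  · have : Subsingleton V := Module.finrank_zero_iff.1 hV
    exact Subsingleton.elim _ _
  · have hneg : LinearEquiv.neg K ^ 2 = (1 : V ≃ₗ[K] V) := by ext; simp [sq]
    rw [← Nat.sub_add_cancel hV, pow_succ', pow_mul, hneg, one_pow]

theorem Subgroup.commute_of_forall_sq_eq_one {G : Type*} [Group G] {H : Subgroup G}
    (hH : ∀ h ∈ H, h ^ 2 = 1) {a b : G} (ha : a ∈ H) (hb : b ∈ H) : Commute a b :=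
  (Commute.of_orderOf_dvd_two (G := H)
    (fun h => orderOf_dvd_of_pow_eq_one (Subtype.ext (hH h h.2))) ⟨a, ha⟩ ⟨b, hb⟩).map H.subtype

theorem Subgroup.card_comap_of_le_range {G H : Type*} [Group G] [Group H] (f : G →* H)
    {A : Subgroup H} (hA : A ≤ f.range) : Nat.card (A.comap f) = Nat.card A * Nat.card f.ker := by
  have hsurj : Function.Surjective (f.subgroupComap A) := fun a => by
    obtain ⟨x, hx⟩ := hA a.2
    exact ⟨⟨x, by simp [hx]⟩, Subtype.ext hx⟩
  have hker : (f.subgroupComap A).ker = f.ker.subgroupOf (A.comap f) := by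
    ext x
    rw [MonoidHom.mem_ker, Subgroup.mem_subgroupOf, MonoidHom.mem_ker, Subtype.ext_iff]
    rfl
  rw [Subgroup.card_eq_card_quotient_mul_card_subgroup (f.subgroupComap A).ker,
    Nat.card_congr (QuotientGroup.quotientKerEquivOfSurjective _ hsurj).toEquiv, hker,
    Nat.card_congr (Subgroup.subgroupOfEquivOfLe fun x hx => by simp [f.mem_ker.1 hx]).toEquiv]

def Subgroup.restrictToSubmodule (H : Subgroup (V ≃ₗ[K] V)) (W : Submodule K V)
    (hW : ∀ h ∈ H, ∀ x ∈ W, h x ∈ W) : H →* (W ≃ₗ[K] W) where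
  toFun h := (h : V ≃ₗ[K] V).ofSubmodules W W <| le_antisymm
    (Submodule.map_le_iff_le_comap.2 (hW h h.2))
    fun x hx => ⟨(h : V ≃ₗ[K] V).symm x, hW _ (inv_mem h.2) x hx,
      LinearEquiv.apply_symm_apply _ x⟩
  map_one' := rfl
  map_mul' _ _ := rfl

theorem Subgroup.card_dvd_card_range_restrictToSubmodule_mul (H : Subgroup (V ≃ₗ[K] V))
    {W₁ W₂ : Submodule K V} (hW : W₁ ⊔ W₂ = ⊤) (h₁ : ∀ h ∈ H, ∀ x ∈ W₁, h x ∈ W₁)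
    (h₂ : ∀ h ∈ H, ∀ x ∈ W₂, h x ∈ W₂) :
    Nat.card H ∣ Nat.card (H.restrictToSubmodule W₁ h₁).range *
      Nat.card (H.restrictToSubmodule W₂ h₂).range := by
  set r₁ := H.restrictToSubmodule W₁ h₁
  set r₂ := H.restrictToSubmodule W₂ h₂
  have hfix {W : Submodule K V} {hWH} {h : H} (hr : H.restrictToSubmodule W hWH h = 1) {x : V}
      (hx : x ∈ W) : (h : V ≃ₗ[K] V) x = x :=
    congrArg Subtype.val (LinearEquiv.congr_fun hr ⟨x, hx⟩)
  have hinj : Function.Injective (r₁.rangeRestrict.prod r₂.rangeRestrict) := by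
    refine (injective_iff_map_eq_one _).2 fun h hh => Subtype.ext (LinearEquiv.ext fun x => ?_)
    simp only [MonoidHom.prod_apply, Prod.mk_eq_one, Subtype.ext_iff, MonoidHom.coe_rangeRestrict,
      OneMemClass.coe_one] at hh
    obtain ⟨x₁, hx₁, x₂, hx₂, rfl⟩ := Submodule.mem_sup.1 (hW ▸ Submodule.mem_top (x := x))
    rw [map_add, hfix hh.1 hx₁, hfix hh.2 hx₂]
    rfl
  exact (Subgroup.card_dvd_of_injective _ hinj).trans (Nat.card_prod _ _).dvd

theorem Subgroup.card_dvd_two_pow_finrank_of_forall_sq_eq_one [FiniteDimensional K V]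
    (h2 : (2 : K) ≠ 0) (H : Subgroup (V ≃ₗ[K] V)) (hH : ∀ h ∈ H, h ^ 2 = 1) :
    Nat.card H ∣ 2 ^ Module.finrank K V := by
  induction hn : Module.finrank K V using Nat.strong_induction_on generalizing V with
  | _ n ih =>
  by_cases hscalar : ∀ h ∈ H, h = 1 ∨ h = LinearEquiv.neg K
  · refine (Subgroup.card_dvd_of_le fun h hh => ?_).trans
      ((Nat.card_zpowers _).dvd.trans (hn ▸ LinearEquiv.orderOf_neg_dvd_two_pow_finrank))
    rcases hscalar h hh with rfl | rfl
    exacts [one_mem _, Subgroup.mem_zpowers _]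
  push Not at hscalar
  obtain ⟨u, hu, hu1, hu_neg⟩ := hscalar
  -- `H` acts on the two eigenspaces of the involution `u`, both of smaller dimension
  set f : Module.End K V := (u : V →ₗ[K] V)
  have hf : f ^ 2 = 1 :=
    (map_pow LinearEquiv.automorphismGroup.toLinearMapMonoidHom u 2).symm.trans
      (by rw [hH u hu, map_one])
  have hmaps (μ : K) : ∀ h ∈ H, ∀ x ∈ f.eigenspace μ, h x ∈ f.eigenspace μ := fun h hh _ hx =>
    Module.End.mapsTo_genEigenspace_of_comm ((Subgroup.commute_of_forall_sq_eq_one hH hu hh).map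
      LinearEquiv.automorphismGroup.toLinearMapMonoidHom) μ 1 hx
  have hlt (μ : K) (hμ : ∃ x, u x ≠ μ • x) : Module.finrank K (f.eigenspace μ) < n := by
    refine hn ▸ Submodule.finrank_lt fun htop => ?_
    obtain ⟨x, hx⟩ := hμ
    exact hx (Module.End.mem_eigenspace_iff.1 (htop ▸ Submodule.mem_top))
  have hsq {W : Submodule K V} (r : H →* (W ≃ₗ[K] W)) : ∀ k ∈ r.range, k ^ 2 = 1 := by
    rintro _ ⟨h, rfl⟩
    rw [← map_pow, show h ^ 2 = 1 from Subtype.ext (hH h h.2), map_one]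
  have hcompl := Module.End.isCompl_eigenspace_one_neg_one hf h2
  calc Nat.card H ∣ _ := H.card_dvd_card_range_restrictToSubmodule_mul hcompl.sup_eq_top
        (hmaps 1) (hmaps (-1))
    _ ∣ 2 ^ Module.finrank K (f.eigenspace 1) * 2 ^ Module.finrank K (f.eigenspace (-1)) :=
      mul_dvd_mul
        (ih _ (hlt 1 (by simpa using fun h => hu1 (LinearEquiv.ext h))) _ (hsq _) rfl)
        (ih _ (hlt (-1) (by simpa using fun h => hu_neg (LinearEquiv.ext h))) _ (hsq _) rfl)
    _ = 2 ^ n := by rw [← pow_add, Submodule.finrank_add_eq_of_isCompl hcompl, hn]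

variable (K) in
abbrev SquareClass := Kˣ ⧸ (powMonoidHom 2 : Kˣ →* Kˣ).range

theorem SquareClass.sq_eq_one (z : SquareClass K) : z ^ 2 = 1 := by
  induction z using QuotientGroup.induction_on with
  | H a => exact (QuotientGroup.eq_one_iff _).2 ⟨a, rfl⟩

section Similitude

variable {φ : LinearMap.BilinForm K V}

theorem mem_similitudeSubgroup {u : V ≃ₗ[K] V} :
    u ∈ similitudeSubgroup φ ↔ ∃ μ : K, μ ≠ 0 ∧ ∀ x y : V, φ (u x) (u y) = μ * φ x y :=
  Iff.rfl

theorem LinearMap.BilinForm.eq_of_forall_mul_eq_mul (hφ : φ ≠ 0) {μ ν : K}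
    (h : ∀ x y : V, μ * φ x y = ν * φ x y) : μ = ν := by
  obtain ⟨x, y, hxy⟩ : ∃ x y, φ x y ≠ 0 := by
    by_contra! h0
    exact hφ (LinearMap.ext₂ h0)
  exact mul_right_cancel₀ hxy (h x y)

open LinearMap.BilinForm

noncomputable def similitudeFactor (hφ : φ ≠ 0) : similitudeSubgroup φ →* Kˣ where
  toFun u := Units.mk0 _ (mem_similitudeSubgroup.1 u.2).choose_spec.1
  map_one' := Units.ext <| eq_of_forall_mul_eq_mul hφ fun x y =>
    ((mem_similitudeSubgroup.1 (1 : similitudeSubgroup φ).2).choose_spec.2 x y).symm.trans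
      (one_mul _).symm
  map_mul' u v := Units.ext <| eq_of_forall_mul_eq_mul hφ fun x y => by
    have hu := (mem_similitudeSubgroup.1 u.2).choose_spec.2
    have hv := (mem_similitudeSubgroup.1 v.2).choose_spec.2
    have huv := (mem_similitudeSubgroup.1 (u * v).2).choose_spec.2
    simp only [Units.val_mul, Units.val_mk0, mul_assoc]
    rw [← huv, ← hv, ← hu]
    rfl

theorem similitudeFactor_spec (hφ : φ ≠ 0) (u : similitudeSubgroup φ) (x y : V) :
    φ ((u : V ≃ₗ[K] V) x) ((u : V ≃ₗ[K] V) y) = similitudeFactor hφ u * φ x y :=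
  (mem_similitudeSubgroup.1 u.2).choose_spec.2 x y

theorem similitudeFactor_eq_of (hφ : φ ≠ 0) {u : similitudeSubgroup φ} {μ : K}
    (hu : ∀ x y : V, φ ((u : V ≃ₗ[K] V) x) ((u : V ≃ₗ[K] V) y) = μ * φ x y) :
    (similitudeFactor hφ u : K) = μ :=
  eq_of_forall_mul_eq_mul hφ fun x y => (similitudeFactor_spec hφ u x y).symm.trans (hu x y)

theorem mem_ker_similitudeFactor (hφ : φ ≠ 0) {u : similitudeSubgroup φ} :
    u ∈ (similitudeFactor hφ).ker ↔
      ∀ x y : V, φ ((u : V ≃ₗ[K] V) x) ((u : V ≃ₗ[K] V) y) = φ x y := by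
  rw [MonoidHom.mem_ker, Units.ext_iff]
  refine ⟨fun h x y => by rw [similitudeFactor_spec hφ, h, Units.val_one, one_mul],
    fun h => similitudeFactor_eq_of hφ fun x y => (h x y).trans (one_mul _).symm⟩

variable (φ) in
def scalarSimilitude : Kˣ →* similitudeSubgroup φ :=
  (DistribMulAction.toModuleAut K V).codRestrict _ fun c =>
    ⟨c ^ 2, pow_ne_zero 2 c.ne_zero, fun x y => by
      simp [DistribMulAction.toModuleAut, Units.smul_def, sq, mul_assoc]⟩

theorem mem_scalarSubgroup_iff {u : similitudeSubgroup φ} :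
    u ∈ scalarSubgroup φ ↔ ∃ c : Kˣ, scalarSimilitude φ c = u :=
  ⟨fun ⟨c, hc, hu⟩ => ⟨Units.mk0 c hc, Subtype.ext (LinearEquiv.ext fun x => (hu x).symm)⟩,
    fun ⟨c, hc⟩ => hc ▸ ⟨c, c.ne_zero, fun _ => rfl⟩⟩

theorem similitudeFactor_scalarSimilitude (hφ : φ ≠ 0) (c : Kˣ) :
    similitudeFactor hφ (scalarSimilitude φ c) = c ^ 2 :=
  Units.ext <| similitudeFactor_eq_of hφ fun x y => by
    simp [scalarSimilitude, DistribMulAction.toModuleAut, Units.smul_def, sq, mul_assoc]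

noncomputable def projSimilitudeFactor (hφ : φ ≠ 0) : projOrthogonalGroup φ →* SquareClass K :=
  QuotientGroup.lift _ ((QuotientGroup.mk' _).comp (similitudeFactor hφ)) fun u hu => by
    obtain ⟨c, rfl⟩ := mem_scalarSubgroup_iff.1 hu
    rw [MonoidHom.mem_ker, MonoidHom.comp_apply, similitudeFactor_scalarSimilitude,
      QuotientGroup.mk'_apply, QuotientGroup.eq_one_iff]
    exact ⟨c, rfl⟩

noncomputable def orthogonalToProj (hφ : φ ≠ 0) :
    (similitudeFactor hφ).ker →* projOrthogonalGroup φ :=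
  (QuotientGroup.mk' _).comp (similitudeFactor hφ).ker.subtype

theorem ker_projSimilitudeFactor_le_range (hφ : φ ≠ 0) :
    (projSimilitudeFactor hφ).ker ≤ (orthogonalToProj hφ).range := by
  intro g hg
  obtain ⟨w, rfl⟩ := QuotientGroup.mk_surjective g
  obtain ⟨c, hc⟩ := (QuotientGroup.eq_one_iff _).1 hg
  refine ⟨⟨scalarSimilitude φ c⁻¹ * w, ?_⟩, ?_⟩
  · rw [MonoidHom.mem_ker, map_mul, similitudeFactor_scalarSimilitude, ← hc]
    simp [powMonoidHom_apply]
  · rw [orthogonalToProj, MonoidHom.comp_apply, Subgroup.coe_subtype, QuotientGroup.mk'_apply,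
      QuotientGroup.mk_mul, (QuotientGroup.eq_one_iff _).2 (mem_scalarSubgroup_iff.2 ⟨_, rfl⟩),
      one_mul]

theorem sq_eq_one_of_isOfFinOrder_orthogonalToProj [CharZero K]
    (hroots : ∀ n : ℕ, 0 < n → ∃ ζ : K, IsPrimitiveRoot ζ n)
    (haniso : ∀ v : V, v ≠ 0 → φ v v ≠ 0) (hφ : φ ≠ 0) {u : (similitudeFactor hφ).ker}
    (hu : IsOfFinOrder (orthogonalToProj hφ u)) : u ^ 2 = 1 := by
  set m := orderOf (orthogonalToProj hφ u)
  have hm : 0 < m := hu.orderOf_pos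
  obtain ⟨c, hc⟩ : ∃ c : Kˣ,
      scalarSimilitude φ c = ((u ^ m : (similitudeFactor hφ).ker) : similitudeSubgroup φ) :=
    mem_scalarSubgroup_iff.1 ((QuotientGroup.eq_one_iff _).1
      ((map_pow (orthogonalToProj hφ) u m).trans (pow_orderOf_eq_one _)))
  -- the scalar isometry `u ^ m` is `± 1`
  have hc2 : c ^ 2 = 1 := by
    rw [← similitudeFactor_scalarSimilitude hφ, hc]
    exact (u ^ m).2
  have hu2m : u ^ (2 * m) = 1 := by
    rw [pow_mul']
    ext : 2
    simp only [SubmonoidClass.coe_pow, ← hc, ← map_pow, hc2, map_one, OneMemClass.coe_one]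
  let toEnd : (similitudeFactor hφ).ker →* Module.End K V :=
    LinearEquiv.automorphismGroup.toLinearMapMonoidHom.comp
      ((similitudeSubgroup φ).subtype.comp (similitudeFactor hφ).ker.subtype)
  have hinj : Function.Injective toEnd :=
    LinearEquiv.toLinearMap_injective.comp (Subtype.val_injective.comp Subtype.val_injective)
  have htoEnd (k : ℕ) : u ^ k = 1 ↔ toEnd u ^ k = 1 := by
    rw [← map_pow, ← map_one toEnd, hinj.eq_iff]
  obtain ⟨ζ, hζ⟩ := hroots (2 * m) (by omega)
  exact (htoEnd 2).2 (isometry_sq_eq_one_of_pow_eq_one haniso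
    (fun x => (mem_ker_similitudeFactor hφ).1 u.2 x x) hζ
    (by exact_mod_cast (by omega : 2 * m ≠ 0)) ((htoEnd _).1 hu2m))

theorem sq_eq_one_of_mem_ker_projSimilitudeFactor [CharZero K]
    (hroots : ∀ n : ℕ, 0 < n → ∃ ζ : K, IsPrimitiveRoot ζ n)
    (haniso : ∀ v : V, v ≠ 0 → φ v v ≠ 0) (hφ : φ ≠ 0) {g : projOrthogonalGroup φ}
    (hg : g ∈ (projSimilitudeFactor hφ).ker) (hfin : IsOfFinOrder g) : g ^ 2 = 1 := by
  obtain ⟨u, rfl⟩ := ker_projSimilitudeFactor_le_range hφ hg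
  rw [← map_pow, sq_eq_one_of_isOfFinOrder_orthogonalToProj hroots haniso hφ hfin, map_one]

theorem card_ker_orthogonalToProj [Nontrivial V] (h2 : (2 : K) ≠ 0) (hφ : φ ≠ 0) :
    Nat.card (orthogonalToProj hφ).ker = 2 := by
  let ε : (similitudeFactor hφ).ker := ⟨scalarSimilitude φ (-1), by
    rw [MonoidHom.mem_ker, similitudeFactor_scalarSimilitude, neg_one_sq]⟩
  have hε : orderOf ε = 2 := by
    refine orderOf_eq_prime ?_ fun h => ?_
    · ext : 2
      simp only [ε, SubmonoidClass.coe_pow, ← map_pow, neg_one_sq, map_one, OneMemClass.coe_one]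
    · obtain ⟨v, hv⟩ := exists_ne (0 : V)
      have hv' : (-1 : K) • v = v :=
        congrArg (fun u : (similitudeFactor hφ).ker => (u : V ≃ₗ[K] V) v) h
      rw [neg_one_smul, neg_eq_iff_add_eq_zero, ← two_smul K, smul_eq_zero] at hv'
      exact hv (hv'.resolve_left h2)
  suffices (orthogonalToProj hφ).ker = Subgroup.zpowers ε by rw [this, Nat.card_zpowers, hε]
  refine le_antisymm (fun u hu => ?_) (Subgroup.zpowers_le.2
    ((QuotientGroup.eq_one_iff _).2 (mem_scalarSubgroup_iff.2 ⟨-1, rfl⟩)))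
  obtain ⟨c, hc : scalarSimilitude φ c = u⟩ :=
    mem_scalarSubgroup_iff.1 ((QuotientGroup.eq_one_iff _).1 hu)
  have hc2 : (c : K) ^ 2 = 1 := by
    rw [← Units.val_pow_eq_pow_val, ← similitudeFactor_scalarSimilitude hφ, hc, u.2, Units.val_one]
  rcases sq_eq_one_iff.1 hc2 with h | h
  · rw [Units.val_eq_one.1 h, map_one] at hc
    rw [show u = 1 from Subtype.ext hc.symm]
    exact one_mem _
  · rw [show c = -1 from Units.ext h] at hc
    rw [show u = ε from Subtype.ext hc.symm]
    exact Subgroup.mem_zpowers ε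

theorem card_dvd_two_pow_finrank_sub_one [FiniteDimensional K V] [CharZero K]
    (hdim : 0 < Module.finrank K V) (hroots : ∀ n : ℕ, 0 < n → ∃ ζ : K, IsPrimitiveRoot ζ n)
    (haniso : ∀ v : V, v ≠ 0 → φ v v ≠ 0) (hφ : φ ≠ 0) {C : Subgroup (projOrthogonalGroup φ)}
    (hC : C ≤ (projSimilitudeFactor hφ).ker) (hfin : ∀ g ∈ C, IsOfFinOrder g) :
    Nat.card C ∣ 2 ^ (Module.finrank K V - 1) := by
  have : Nontrivial V := Module.finrank_pos_iff.1 hdim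
  -- the isometries lifting `C` form a group of involutions, a double cover of `C`
  set Γ := C.comap (orthogonalToProj hφ)
  let ι : (similitudeFactor hφ).ker →* (V ≃ₗ[K] V) :=
    (similitudeSubgroup φ).subtype.comp (similitudeFactor hφ).ker.subtype
  have hΓ : Nat.card (Γ.map ι) = Nat.card C * 2 := by
    rw [Subgroup.card_map_of_injective (Subtype.val_injective.comp Subtype.val_injective),
      Subgroup.card_comap_of_le_range _ (hC.trans (ker_projSimilitudeFactor_le_range hφ)),
      card_ker_orthogonalToProj two_ne_zero hφ]
  have hsq : ∀ h ∈ Γ.map ι, h ^ 2 = 1 := by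
    rintro _ ⟨u, hu, rfl⟩
    rw [← map_pow, sq_eq_one_of_isOfFinOrder_orthogonalToProj hroots haniso hφ (hfin _ hu),
      map_one]
  have := Subgroup.card_dvd_two_pow_finrank_of_forall_sq_eq_one two_ne_zero _ hsq
  rw [hΓ, ← Nat.sub_add_cancel hdim, pow_succ] at this
  exact Nat.dvd_of_mul_dvd_mul_right two_pos this

end Similitude

theorem derivedSeries_two_eq_bot_of_commutator_mem {G : Type*} [Group G] {A : Subgroup G}
    (hA : ∀ a ∈ A, ∀ b ∈ A, a * b = b * a) (h : ∀ x y : G, ⁅x, y⁆ ∈ A) :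
    derivedSeries G 2 = ⊥ := by
  have h1 : derivedSeries G 1 ≤ A := by
    rw [derivedSeries_one]
    exact Subgroup.commutator_le.2 fun x _ y _ => h x y
  rw [derivedSeries_succ, eq_bot_iff]
  refine (Subgroup.commutator_mono h1 h1).trans (Subgroup.commutator_le.2 fun a ha b hb => ?_)
  rw [Subgroup.mem_bot, commutatorElement_eq_one_iff_mul_comm]
  exact hA a ha b hb

theorem stmt7_general {K V : Type*} [Field K] [CharZero K] [AddCommGroup V] [Module K V]
    [FiniteDimensional K V] (hdim : 0 < Module.finrank K V)
    (hroots : ∀ n : ℕ, 0 < n → ∃ ζ : K, IsPrimitiveRoot ζ n)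
    (φ : LinearMap.BilinForm K V)
    (haniso : ∀ v : V, v ≠ 0 → φ v v ≠ 0)
    (B : Subgroup (projOrthogonalGroup φ)) (hBfin : Finite B) :
    (∃ A : Subgroup B, A.Normal ∧
      (∀ a ∈ A, ∀ b ∈ A, a * b = b * a) ∧ (∀ a ∈ A, a ^ 2 = 1) ∧
      Nat.card A ∣ 2 ^ (Module.finrank K V - 1) ∧
      (∀ x y : B, ⁅x, y⁆ ∈ A) ∧ (∀ x : B, x ^ 2 ∈ A)) ∧
    (∃ k : ℕ, Nat.card B = 2 ^ k) ∧ derivedSeries B 2 = ⊥ := by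
  obtain ⟨v, hv⟩ := (Module.finrank_pos_iff_exists_ne_zero (R := K)).1 hdim
  have hφ : φ ≠ 0 := fun h => haniso v hv (by simp [h])
  set F := (projSimilitudeFactor hφ).comp B.subtype
  have hfin (b : B) : IsOfFinOrder (b : projOrthogonalGroup φ) :=
    B.subtype.isOfFinOrder (isOfFinOrder_of_finite b)
  have hsq : ∀ a ∈ F.ker, a ^ 2 = 1 := fun a ha =>
    Subtype.ext (sq_eq_one_of_mem_ker_projSimilitudeFactor hroots haniso hφ ha (hfin a))
  have hcomm : ∀ a ∈ F.ker, ∀ b ∈ F.ker, a * b = b * a := fun a ha b hb =>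
    (Subgroup.commute_of_forall_sq_eq_one hsq ha hb).eq
  have hcommutator (x y : B) : ⁅x, y⁆ ∈ F.ker := by
    rw [MonoidHom.mem_ker, map_commutatorElement, commutatorElement_eq_one_iff_mul_comm]
    exact mul_comm (F x) (F y)
  have hsq_mem (x : B) : x ^ 2 ∈ F.ker := by
    rw [MonoidHom.mem_ker, map_pow]
    exact SquareClass.sq_eq_one _
  refine ⟨⟨F.ker, inferInstance, hcomm, hsq, ?_, hcommutator, hsq_mem⟩,
    IsPGroup.iff_card.1 fun b => ⟨2, by rw [pow_succ, pow_one, pow_mul, hsq _ (hsq_mem b)]⟩,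
    derivedSeries_two_eq_bot_of_commutator_mem hcomm hcommutator⟩
  rw [← Subgroup.card_map_of_injective B.subtype_injective]
  exact card_dvd_two_pow_finrank_sub_one hdim hroots haniso hφ
    (Subgroup.map_le_iff_le_comap.2 le_rfl) (by rintro _ ⟨a, -, rfl⟩; exact hfin a)

/-- Let `K` be a field of characteristic zero containing all roots of
unity, `V` a `K`-vector space of finite positive dimension `d`, and `φ` a nondegenerate
symmetric anisotropic `K`-bilinear form on `V`. Let `B` be a finite subgroup of
`PO(V,φ) = GO(V,φ)/(K*·1_V)`. Then `B` contains a normal subgroup `A₁` such that `A₁` is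
an elementary abelian `2`-group whose order divides `2 ^ (d-1)`, and the quotient `B/A₁`
is an elementary abelian `2`-group (i.e. all commutators and all squares of elements of
`B` lie in `A₁`). In particular, `B` is a finite `2`-group and its second derived
subgroup is trivial: `[[B,B],[B,B]] = {1}`. -/
theorem stmt7 {K V : Type*} [Field K] [CharZero K] [AddCommGroup V] [Module K V]
    [FiniteDimensional K V] (hdim : 0 < Module.finrank K V)
    (hroots : ∀ n : ℕ, 0 < n → ∃ ζ : K, IsPrimitiveRoot ζ n)
    (φ : LinearMap.BilinForm K V)
    (hsymm : ∀ x y : V, φ x y = φ y x)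
    (hnondeg : ∀ x : V, (∀ y : V, φ x y = 0) → x = 0)
    (haniso : ∀ v : V, v ≠ 0 → φ v v ≠ 0)
    (B : Subgroup (projOrthogonalGroup φ)) (hBfin : Finite B) :
    (∃ A : Subgroup B, A.Normal ∧
      (∀ a ∈ A, ∀ b ∈ A, a * b = b * a) ∧ (∀ a ∈ A, a ^ 2 = 1) ∧
      Nat.card A ∣ 2 ^ (Module.finrank K V - 1) ∧
      (∀ x y : B, ⁅x, y⁆ ∈ A) ∧ (∀ x : B, x ^ 2 ∈ A)) ∧
    (∃ k : ℕ, Nat.card B = 2 ^ k) ∧ derivedSeries B 2 = ⊥ :=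
  stmt7_general hdim hroots φ haniso B hBfin
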